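/- arXiv:1604.01101 — 2 statements merged into one kernel-verified Lean document; each statement's English description precedes it below -/
import Mathlib

section
/- Let I ⊆ R be an S_n-stable homogeneous ideal and V ⊆ I a graded S_n-stable subspace mapping isomorphically onto I/mI (an equivariant lift), where m = (x_1,...,x_n). If V contains a direct sum of at least two (possibly isomorphic) nontrivial irreducible S_n-subrepresentations, then I is not a complete intersection. -/
open MvPolynomial

noncomputable section

/-- An ideal is a complete intersection if it is generated by a regular sequence. -/
def IsCompleteIntersection {A : Type*} [CommRing A] (I : Ideal A) : Prop :=
  ∃ rs : List A, RingTheory.Sequence.IsRegular A rs ∧ Ideal.span {r | r ∈ rs} = I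

/-- A subspace of `k[x_1,…,x_n]` is `S_n`-stable if it is closed under
permutations of the variables. -/
def Stable {k : Type*} [Field k] {n : ℕ}
    (W : Submodule k (MvPolynomial (Fin n) k)) : Prop :=
  ∀ σ : Equiv.Perm (Fin n), ∀ p ∈ W, rename (⇑σ) p ∈ W

/-! Since all transpositions are conjugate, one transposition `τ = (u v)` acts nontrivially on both
`W₁` and `W₂`, so each `Wᵢ` contains a nonzero `τ`-antisymmetric `hᵢ`, divisible by
`δ = X u - X v`. Suppose `I` is generated by a regular sequence `r` and write `h₁ = ∑ aᵢ rᵢ`,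
`h₂ = ∑ bᵢ rᵢ`. Syzygies of a regular sequence are Koszul, so the relation between `h₁ = δ s₁` and
`h₂ = δ s₂` forces all minors `aᵢ bⱼ - aⱼ bᵢ` into `I + (δ) ⊆ m`. Hence the constant terms of `a`
and `b` are proportional, which yields a nontrivial combination `μ h₁ + ν h₂ ∈ V ∩ m I = 0`,
contradicting `W₁ ∩ W₂ = 0`. -/

theorem exists_dependence_of_mul_sub_mul_eq_zero {K ι : Type*} [Field K] (α β : ι → K)
    (h : ∀ i j, α i * β j - α j * β i = 0) :
    ∃ μ ν : K, (μ ≠ 0 ∨ ν ≠ 0) ∧ ∀ i, μ * α i + ν * β i = 0 := by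
  by_cases hα : ∀ i, α i = 0
  · exact ⟨1, 0, Or.inl one_ne_zero, fun i => by simp [hα i]⟩
  · obtain ⟨q, hq⟩ := not_forall.mp hα
    exact ⟨β q, -α q, Or.inr (neg_ne_zero.mpr hq), fun i => by linear_combination h i q⟩

namespace RingTheory.Sequence.IsWeaklyRegular

variable {R : Type*} [CommRing R]

theorem mem_span_range_of_sum_mul_eq_zero {c : ℕ} {r : Fin c → R}
    (hr : IsWeaklyRegular R (List.ofFn r)) {a : Fin c → R} (ha : ∑ i, a i * r i = 0) (i : Fin c) :
    a i ∈ Ideal.span (Set.range r) := by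
  induction c with
  | zero => exact i.elim0
  | succ c ih =>
    set J := Ideal.span (Set.range fun j : Fin c => r j.castSucc)
    rw [List.ofFn_succ', List.concat_eq_append, isWeaklyRegular_append_iff,
      isWeaklyRegular_singleton_iff] at hr
    obtain ⟨hinit, hlast⟩ := hr
    have hJ : (Ideal.ofList (List.ofFn fun j : Fin c => r j.castSucc) • ⊤ : Submodule R R) = J := by
      rw [Ideal.smul_eq_mul, Ideal.mul_top]
      exact congrArg Ideal.span (Set.ext (List.mem_ofFn' _))
    rw [hJ] at hlast
    rw [Fin.sum_univ_castSucc] at ha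
    have hlastJ : a (Fin.last c) ∈ J := by
      refine mem_of_isSMulRegular_quotient_of_smul_mem hlast ?_
      rw [smul_eq_mul, mul_comm, eq_neg_of_add_eq_zero_right ha]
      exact neg_mem (Ideal.sum_mem _ fun j _ => Ideal.mul_mem_left _ _ (Ideal.subset_span ⟨j, rfl⟩))
    obtain ⟨b, hb⟩ := Ideal.mem_span_range_iff_exists_fun.mp hlastJ
    have hJle : J ≤ Ideal.span (Set.range r) :=
      Ideal.span_mono (Set.range_comp_subset_range _ _)
    have hlast_mem : r (Fin.last c) ∈ Ideal.span (Set.range r) := Ideal.subset_span ⟨_, rfl⟩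
    induction i using Fin.lastCases with
    | last => exact hJle hlastJ
    | cast i =>
      have hsyz : ∑ j : Fin c, (a j.castSucc + b j * r (Fin.last c)) * r j.castSucc = 0 := by
        simp only [add_mul, Finset.sum_add_distrib, mul_right_comm _ (r (Fin.last c)),
          ← Finset.sum_mul, hb, ha]
      have := hJle (ih hinit hsyz i)
      simpa using sub_mem this (Ideal.mul_mem_left _ (b i) hlast_mem)

theorem mul_sub_mul_mem_sup_span_singleton {c : ℕ} {r : Fin c → R}
    (hr : IsWeaklyRegular R (List.ofFn r)) {δ s₁ s₂ : R} {a b : Fin c → R}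
    (ha : ∑ i, a i * r i = δ * s₁) (hb : ∑ i, b i * r i = δ * s₂) (i j : Fin c) :
    a i * b j - a j * b i ∈ Ideal.span (Set.range r) ⊔ Ideal.span {δ} := by
  have hsyz₁ (i : Fin c) : s₂ * a i - s₁ * b i ∈ Ideal.span (Set.range r) := by
    refine hr.mem_span_range_of_sum_mul_eq_zero (a := fun i => s₂ * a i - s₁ * b i) ?_ i
    calc ∑ i, (s₂ * a i - s₁ * b i) * r i = s₂ * ∑ i, a i * r i - s₁ * ∑ i, b i * r i := by
          simp only [Finset.mul_sum, ← Finset.sum_sub_distrib]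
          exact Finset.sum_congr rfl fun _ _ => by ring
      _ = 0 := by rw [ha, hb]; ring
  choose d hd using fun i => Ideal.mem_span_range_iff_exists_fun.mp (hsyz₁ i)
  have hsyz₂ : a i * b j - a j * b i - δ * d i j ∈ Ideal.span (Set.range r) := by
    refine hr.mem_span_range_of_sum_mul_eq_zero (a := fun j => a i * b j - a j * b i - δ * d i j)
      ?_ j
    calc ∑ j, (a i * b j - a j * b i - δ * d i j) * r j
        = a i * ∑ j, b j * r j - b i * ∑ j, a j * r j - δ * ∑ j, d i j * r j := by
          simp only [Finset.mul_sum, ← Finset.sum_sub_distrib]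
          exact Finset.sum_congr rfl fun _ _ => by ring
      _ = 0 := by rw [ha, hb, hd]; ring
  rw [show a i * b j - a j * b i = (a i * b j - a j * b i - δ * d i j) + δ * d i j by ring]
  exact add_mem (Ideal.mem_sup_left hsyz₂)
    (Ideal.mem_sup_right (Ideal.mem_span_singleton.mpr (dvd_mul_right _ _)))

theorem exists_smul_add_smul_mem_ker_mul {K : Type*} [Field K] [Algebra K R]
    {rs : List R} (hrs : IsWeaklyRegular R rs) (φ : R →ₐ[K] K)
    (hφ : Ideal.ofList rs ≤ RingHom.ker φ) {δ h₁ h₂ : R} (hδ : φ δ = 0)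
    (hδ₁ : δ ∣ h₁) (hδ₂ : δ ∣ h₂) (hh₁ : h₁ ∈ Ideal.ofList rs) (hh₂ : h₂ ∈ Ideal.ofList rs) :
    ∃ μ ν : K, (μ ≠ 0 ∨ ν ≠ 0) ∧ μ • h₁ + ν • h₂ ∈ RingHom.ker φ * Ideal.ofList rs := by
  have hr : IsWeaklyRegular R (List.ofFn rs.get) := by rwa [List.ofFn_get]
  have hJ : Ideal.ofList rs = Ideal.span (Set.range rs.get) := by rw [Set.range_list_get]
  rw [hJ] at hφ hh₁ hh₂ ⊢
  obtain ⟨a, rfl⟩ := Ideal.mem_span_range_iff_exists_fun.mp hh₁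
  obtain ⟨b, rfl⟩ := Ideal.mem_span_range_iff_exists_fun.mp hh₂
  obtain ⟨s₁, hs₁⟩ := hδ₁
  obtain ⟨s₂, hs₂⟩ := hδ₂
  have hminor (i j) : φ (a i) * φ (b j) - φ (a j) * φ (b i) = 0 := by
    have hle : Ideal.span (Set.range rs.get) ⊔ Ideal.span {δ} ≤ RingHom.ker φ :=
      sup_le hφ (Ideal.span_singleton_le_iff_mem _ |>.mpr hδ)
    simpa using hle (hr.mul_sub_mul_mem_sup_span_singleton hs₁ hs₂ i j)
  obtain ⟨μ, ν, hμν, hdep⟩ := exists_dependence_of_mul_sub_mul_eq_zero _ _ hminor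
  refine ⟨μ, ν, hμν, ?_⟩
  have hcomb : μ • ∑ i, a i * rs.get i + ν • ∑ i, b i * rs.get i
      = ∑ i, (algebraMap K R μ * a i + algebraMap K R ν * b i) * rs.get i := by
    simp only [Algebra.smul_def, Finset.mul_sum, ← Finset.sum_add_distrib]
    exact Finset.sum_congr rfl fun _ _ => by ring
  rw [hcomb]
  refine Ideal.sum_mem _ fun i _ => Ideal.mul_mem_mul ?_ (Ideal.subset_span ⟨i, rfl⟩)
  simpa [RingHom.mem_ker] using hdep i

end RingTheory.Sequence.IsWeaklyRegular

theorem Submodule.smul_add_smul_ne_zero_of_disjoint {K M : Type*} [Field K] [AddCommGroup M]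
    [Module K M] {W₁ W₂ : Submodule K M} (hW : Disjoint W₁ W₂) {x y : M} (hx : x ∈ W₁)
    (hy : y ∈ W₂) (hx0 : x ≠ 0) (hy0 : y ≠ 0) {μ ν : K} (hμν : μ ≠ 0 ∨ ν ≠ 0) :
    μ • x + ν • y ≠ 0 := by
  intro h
  have hμx : μ • x = 0 := Submodule.disjoint_def.mp hW _ (W₁.smul_mem μ hx)
    (eq_neg_of_add_eq_zero_left h ▸ W₂.neg_mem (W₂.smul_mem ν hy))
  rw [hμx, zero_add] at h
  rcases hμν with hμ | hν
  · exact smul_ne_zero hμ hx0 hμx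
  · exact smul_ne_zero hν hy0 h

theorem RingTheory.Sequence.IsRegular.ofList_ne_top {R : Type*} [CommRing R] {rs : List R}
    (hrs : IsRegular R rs) : Ideal.ofList rs ≠ ⊤ := by
  intro h
  apply hrs.top_ne_smul
  rw [h, Submodule.top_smul]

namespace MvPolynomial

variable {k : Type*} [Field k] {σ : Type*}

theorem le_ker_aeval_zero_of_ne_top {I : Ideal (MvPolynomial σ k)} (hI : I ≠ ⊤)
    (hIhom : ∀ p ∈ I, ∀ d, homogeneousComponent d p ∈ I) :
    I ≤ RingHom.ker (aeval (0 : σ → k)) := by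
  intro p hp
  by_contra hp0
  have hC : C (coeff 0 p) ∈ I := homogeneousComponent_zero p ▸ hIhom p hp 0
  refine hI (Ideal.eq_top_of_isUnit_mem _ hC ((Ne.isUnit ?_).map C))
  simpa [RingHom.mem_ker, constantCoeff_eq] using hp0

theorem ker_aeval_zero_le_idealOfVars :
    RingHom.ker (aeval (0 : σ → k)) ≤ idealOfVars σ k := by
  intro p hp
  rw [← pow_one (idealOfVars σ k), mem_pow_idealOfVars_iff']
  intro x hx
  rw [Nat.lt_one_iff, Finsupp.degree_eq_zero_iff] at hx
  have hp0 : constantCoeff p = 0 := by simpa [RingHom.mem_ker] using hp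
  rwa [hx]

/-- The substitution `X u ↦ X v` is invariant under `swap u v` and trivial modulo `X u - X v`;
an antisymmetric `p` is therefore killed by it, hence lies in `(X u - X v)`. -/
theorem X_sub_X_dvd_of_rename_swap_eq_neg [CharZero k] [DecidableEq σ] {u v : σ} (huv : u ≠ v)
    {p : MvPolynomial σ k} (hp : rename (Equiv.swap u v) p = -p) : X u - X v ∣ p := by
  set f : σ → σ := Function.update id u v
  set J : Ideal (MvPolynomial σ k) := Ideal.span {X u - X v}
  have hf_swap : f ∘ Equiv.swap u v = f := by
    funext i
    by_cases hiu : i = u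
    · simp [f, hiu, huv.symm]
    by_cases hiv : i = v
    · simp [f, hiv, huv.symm]
    · simp [f, Equiv.swap_apply_of_ne_of_ne hiu hiv]
  have hmk : (Ideal.Quotient.mkₐ k J).comp (rename f) = Ideal.Quotient.mkₐ k J := by
    refine algHom_ext fun i => ?_
    by_cases hiu : i = u
    · subst hiu
      simpa [f, Ideal.Quotient.eq, J, Ideal.mem_span_singleton] using (dvd_sub_comm).mp dvd_rfl
    · simp [f, hiu]
  have hfp : rename f p = 0 := by
    have h := congrArg (rename f) hp
    rwa [rename_rename, hf_swap, map_neg, self_eq_neg] at h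
  rw [← Ideal.mem_span_singleton, ← Ideal.Quotient.eq_zero_iff_mem, ← Ideal.Quotient.mkₐ_eq_mk k,
    ← hmk, AlgHom.comp_apply, hfp, map_zero]

end MvPolynomial

namespace Stable

variable {k : Type*} [Field k] {n : ℕ} {W : Submodule k (MvPolynomial (Fin n) k)}

/-- All transpositions are conjugate, so if one of them fixes the stable subspace `W` pointwise
then all do, and then so does every permutation. -/
theorem exists_rename_swap_ne (hW : Stable W)
    (hmove : ∃ σ : Equiv.Perm (Fin n), ∃ p ∈ W, rename σ p ≠ p) {u v : Fin n} (huv : u ≠ v) :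
    ∃ p ∈ W, rename (Equiv.swap u v) p ≠ p := by
  by_contra! hfix
  obtain ⟨σ, p, hp, hσp⟩ := hmove
  have hswap (x y : Fin n) (hxy : x ≠ y) (q) (hq : q ∈ W) : rename (Equiv.swap x y) q = q := by
    obtain ⟨ρ, hρ⟩ := isConj_iff.mp (Equiv.Perm.isConj_swap huv hxy)
    rw [← hρ]
    simp only [Equiv.Perm.coe_mul, ← rename_rename, hfix _ (hW _ _ hq)]
    rw [rename_rename, ← Equiv.Perm.coe_mul, mul_inv_cancel, Equiv.Perm.coe_one, rename_id_apply]
  refine hσp (Equiv.Perm.swap_induction_on σ (by simp) fun f x y hxy hf => ?_)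
  rw [Equiv.Perm.coe_mul, ← rename_rename, hf, hswap x y hxy p hp]

theorem exists_ne_zero_X_sub_X_dvd [CharZero k] (hW : Stable W)
    (hmove : ∃ σ : Equiv.Perm (Fin n), ∃ p ∈ W, rename σ p ≠ p) {u v : Fin n} (huv : u ≠ v) :
    ∃ h ∈ W, h ≠ 0 ∧ X u - X v ∣ h := by
  obtain ⟨f, hf, hτf⟩ := hW.exists_rename_swap_ne hmove huv
  refine ⟨f - rename (Equiv.swap u v) f, sub_mem hf (hW _ _ hf), sub_ne_zero.mpr hτf.symm,
    X_sub_X_dvd_of_rename_swap_eq_neg huv ?_⟩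
  rw [map_sub, rename_rename, ← Equiv.Perm.coe_mul, Equiv.swap_mul_self, Equiv.Perm.coe_one,
    rename_id_apply, neg_sub]

end Stable

theorem stmt5_general {k : Type*} [Field k] [CharZero k] {n : ℕ}
    (I : Ideal (MvPolynomial (Fin n) k))
    -- `I` is `S_n`-stable and homogeneous:
    (hIhom : ∀ p ∈ I, ∀ d, homogeneousComponent d p ∈ I)
    (V : Submodule k (MvPolynomial (Fin n) k))
    (hVI : V ≤ I.restrictScalars k)
    -- `V` is an equivariant lift of `I/mI`, i.e. `V ⊕ mI = I`:
    (hdisj : Disjoint V ((Ideal.span (Set.range (X : Fin n → MvPolynomial (Fin n) k)) * I).restrictScalars k))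
    -- `V` contains a direct sum of two nontrivial irreducible subrepresentations:
    (W₁ W₂ : Submodule k (MvPolynomial (Fin n) k))
    (hW₁V : W₁ ≤ V) (hW₂V : W₂ ≤ V)
    (hdisjW : Disjoint W₁ W₂)
    (hW₁stab : Stable W₁) (hW₂stab : Stable W₂)
    (hW₁nontriv : ∃ σ : Equiv.Perm (Fin n), ∃ p ∈ W₁, rename (⇑σ) p ≠ p)
    (hW₂nontriv : ∃ σ : Equiv.Perm (Fin n), ∃ p ∈ W₂, rename (⇑σ) p ≠ p) :
    ¬ IsCompleteIntersection I := by
  rintro ⟨rs, hrs, rfl⟩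
  obtain ⟨u, v, huv⟩ : ∃ u v : Fin n, u ≠ v := by
    obtain ⟨σ, p, -, hσp⟩ := hW₁nontriv
    by_contra! h
    rw [show σ = 1 from Equiv.ext fun _ => h _ _, Equiv.Perm.coe_one, rename_id_apply] at hσp
    exact hσp rfl
  obtain ⟨h₁, hh₁, hh₁0, hδ₁⟩ := hW₁stab.exists_ne_zero_X_sub_X_dvd hW₁nontriv huv
  obtain ⟨h₂, hh₂, hh₂0, hδ₂⟩ := hW₂stab.exists_ne_zero_X_sub_X_dvd hW₂nontriv huv
  obtain ⟨μ, ν, hμν, hmem⟩ := hrs.toIsWeaklyRegular.exists_smul_add_smul_mem_ker_mul (aeval 0)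
    (le_ker_aeval_zero_of_ne_top hrs.ofList_ne_top hIhom) (by simp) hδ₁ hδ₂
    (hVI (hW₁V hh₁)) (hVI (hW₂V hh₂))
  refine Submodule.smul_add_smul_ne_zero_of_disjoint hdisjW hh₁ hh₂ hh₁0 hh₂0 hμν
    (Submodule.disjoint_def.mp hdisj _ ?_ ?_)
  · exact add_mem (V.smul_mem μ (hW₁V hh₁)) (V.smul_mem ν (hW₂V hh₂))
  · exact Ideal.mul_mono_left ker_aeval_zero_le_idealOfVars hmem

/-- Let `I ⊆ R = k[x_1,…,x_n]` be an `S_n`-stable homogeneous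
ideal, `m = (x_1,…,x_n)`, and let `V ⊆ I` be a graded `S_n`-stable subspace
mapping isomorphically onto `I/mI` (an equivariant lift), i.e. `V ⊕ mI = I` as
`k`-vector spaces.  If `V` contains a direct sum of at least two (possibly
isomorphic) nontrivial irreducible `S_n`-subrepresentations, then `I` is not a
complete intersection. -/
theorem stmt5 {k : Type*} [Field k] [CharZero k] {n : ℕ}
    (I : Ideal (MvPolynomial (Fin n) k))
    -- `I` is `S_n`-stable and homogeneous:
    (hIstab : ∀ σ : Equiv.Perm (Fin n), ∀ p ∈ I, rename (⇑σ) p ∈ I)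
    (hIhom : ∀ p ∈ I, ∀ d, homogeneousComponent d p ∈ I)
    (V : Submodule k (MvPolynomial (Fin n) k))
    (hVI : V ≤ I.restrictScalars k)
    (hVstab : Stable V)
    -- `V` is graded:
    (hVgr : ∀ p ∈ V, ∀ d, homogeneousComponent d p ∈ V)
    -- `V` is an equivariant lift of `I/mI`, i.e. `V ⊕ mI = I`:
    (hdisj : Disjoint V ((Ideal.span (Set.range (X : Fin n → MvPolynomial (Fin n) k)) * I).restrictScalars k))
    (hsup : V ⊔ (Ideal.span (Set.range (X : Fin n → MvPolynomial (Fin n) k)) * I).restrictScalars k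
      = I.restrictScalars k)
    -- `V` contains a direct sum of two nontrivial irreducible subrepresentations:
    (W₁ W₂ : Submodule k (MvPolynomial (Fin n) k))
    (hW₁V : W₁ ≤ V) (hW₂V : W₂ ≤ V)
    (hW₁ : W₁ ≠ ⊥) (hW₂ : W₂ ≠ ⊥)
    (hdisjW : Disjoint W₁ W₂)
    (hW₁stab : Stable W₁) (hW₂stab : Stable W₂)
    (hW₁irr : ∀ U ≤ W₁, Stable U → U = ⊥ ∨ U = W₁)
    (hW₂irr : ∀ U ≤ W₂, Stable U → U = ⊥ ∨ U = W₂)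
    (hW₁nontriv : ∃ σ : Equiv.Perm (Fin n), ∃ p ∈ W₁, rename (⇑σ) p ≠ p)
    (hW₂nontriv : ∃ σ : Equiv.Perm (Fin n), ∃ p ∈ W₂, rename (⇑σ) p ≠ p) :
    ¬ IsCompleteIntersection I :=
  stmt5_general I hIhom V hVI hdisj W₁ W₂ hW₁V hW₂V hdisjW hW₁stab hW₂stab hW₁nontriv hW₂nontriv

end
end

section
/- In R = k[x_1,x_2,x_3,x_4] over a field k of characteristic zero, setting g_1 = (x_1-x_2)(x_3-x_4), g_2 = (x_1-x_3)(x_2-x_4), the sequence g_1, g_2, e_2, e_1^3 is a regular sequence, and the k-span of {g_1, g_2} is an S_4-stable subspace of R isomorphic to the irreducible representation S^{(2,2)}. -/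
/-!
The Hadamard substitution `x ↦ H x` (`H² = 4`) is an automorphism of `k[x₀, x₁, x₂, x₃]` sending
`g₁, g₂` to `4 (z₂² - z₃²), 4 (z₁² - z₃²)`, `e₂` to `6 (z₀² - z₃²)` modulo these, and `e₁³` to
`64 z₀³`. Regularity is then checked one variable at a time through
`k[z₀, …, zₙ] ≅ k[z₁, …, zₙ][z₀]`: a monic polynomial in `z₀` is regular modulo any ideal extended
from `k[z₁, …, zₙ]`, and an element regular modulo `I` stays regular modulo `I` extended plus a
monic polynomial. By induction `zₙ` is regular modulo all `zᵢ² - zₙ²`; hence so is `z₀`, since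
`z₀² ≡ zₙ²` and `zₙ²` is regular modulo the `zᵢ² - zₙ²` with `i ≥ 1`.

Adjacent transpositions map `g₁, g₂` into their span, so the span is `S₄`-stable. If `a g₁ + b g₂`
is a nonzero vector of a stable subspace, then together with its image under `(1 2)` or `(0 1)` it
spans the plane: the determinants `a² - b²` and `b (2a + b)` vanish together only if `a = b = 0`,
as `3 ≠ 0`.
-/

open MvPolynomial

noncomputable section

section QuotientRegular

variable {R S : Type*} [CommRing R] [CommRing S]

theorem isSMulRegular_quotient_iff_mul_mem (I : Ideal R) (r : R) :
    IsSMulRegular (R ⧸ I) r ↔ ∀ x, r * x ∈ I → x ∈ I :=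
  isSMulRegular_quotient_iff_mem_of_smul_mem I r

theorem isSMulRegular_quotient_iff_of_sub_mem {I : Ideal R} {r s : R} (h : r - s ∈ I) :
    IsSMulRegular (R ⧸ I) r ↔ IsSMulRegular (R ⧸ I) s := by
  have hrs : (r • · : R ⧸ I → R ⧸ I) = (s • ·) := by
    funext m
    induction m using Submodule.Quotient.induction_on with
    | _ x =>
      rw [← Submodule.Quotient.mk_smul, ← Submodule.Quotient.mk_smul, Submodule.Quotient.eq,
        smul_eq_mul, smul_eq_mul, ← sub_mul]
      exact I.mul_mem_right x h
  exact iff_of_eq (congrArg Function.Injective hrs)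

theorem isSMulRegular_quotient_unit_mul_iff {I : Ideal R} {u : R} (hu : IsUnit u) (r : R) :
    IsSMulRegular (R ⧸ I) (u * r) ↔ IsSMulRegular (R ⧸ I) r :=
  (hu.isSMulRegular (R ⧸ I)).mul_iff_right

theorem isSMulRegular_quotient_map_iff {E : Type*} [EquivLike E R S] [RingEquivClass E R S]
    (e : E) (I : Ideal R) (r : R) :
    IsSMulRegular (S ⧸ I.map e) (e r) ↔ IsSMulRegular (R ⧸ I) r := by
  have hmem (x : R) : e x ∈ I.map e ↔ x ∈ I :=
    ⟨fun h => by
      obtain ⟨y, hy, hyx⟩ := (Ideal.mem_map_of_equiv e _).1 h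
      rwa [← EquivLike.injective e hyx], Ideal.mem_map_of_mem e⟩
  simp only [isSMulRegular_quotient_iff_mul_mem, (EquivLike.surjective e).forall, ← map_mul, hmem]

theorem Ideal.sup_span_singleton_eq_of_sub_mem {I : Ideal R} {r s u : R} (hu : IsUnit u)
    (h : r - u * s ∈ I) : I ⊔ span {r} = I ⊔ span {s} := by
  obtain ⟨u, rfl⟩ := hu
  have hs : s = ↑u⁻¹ * (r - (r - u * s)) := by simp
  refine le_antisymm (sup_le le_sup_left ?_) (sup_le le_sup_left ?_) <;>
    rw [span_singleton_le_iff_mem]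
  · rw [← sub_add_cancel r (u * s)]
    exact add_mem (Submodule.mem_sup_left h)
      (Submodule.mem_sup_right (mul_mem_left _ _ (mem_span_singleton_self s)))
  · rw [hs]
    exact mul_mem_left _ _ (sub_mem (Submodule.mem_sup_right (mem_span_singleton_self r))
      (Submodule.mem_sup_left h))

end QuotientRegular

theorem RingTheory.Sequence.isWeaklyRegular_append_singleton_iff {R : Type*} [CommRing R]
    (rs : List R) (r : R) :
    IsWeaklyRegular R (rs ++ [r]) ↔
      IsWeaklyRegular R rs ∧ IsSMulRegular (R ⧸ Ideal.ofList rs) r := by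
  rw [isWeaklyRegular_append_iff, isWeaklyRegular_singleton_iff, Ideal.smul_eq_mul, Ideal.mul_top]

theorem MvPolynomial.top_ne_ofList_smul_top {σ R : Type*} [CommRing R] [Nontrivial R]
    {rs : List (MvPolynomial σ R)} (h : ∀ r ∈ rs, constantCoeff r = 0) :
    (⊤ : Submodule (MvPolynomial σ R) (MvPolynomial σ R)) ≠ Ideal.ofList rs • ⊤ := by
  rw [Ideal.smul_eq_mul, Ideal.mul_top, ne_comm, Ne, Ideal.eq_top_iff_one]
  intro h1
  have hle : Ideal.ofList rs ≤ RingHom.ker (constantCoeff (σ := σ) (R := R)) :=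
    Ideal.span_le.2 fun r hr => h r hr
  simpa using hle h1

namespace Polynomial

variable {A : Type*} [CommRing A] {I : Ideal A}

theorem mem_map_C_iff_map_mk_eq_zero {p : A[X]} :
    p ∈ I.map C ↔ p.map (Ideal.Quotient.mk I) = 0 := by
  rw [← coe_mapRingHom, ← RingHom.mem_ker, ker_mapRingHom, Ideal.mk_ker]

theorem Monic.isSMulRegular_quotient_map_C {f : A[X]} (hf : f.Monic) :
    IsSMulRegular (A[X] ⧸ I.map C) f := by
  simp only [isSMulRegular_quotient_iff_mul_mem, mem_map_C_iff_map_mk_eq_zero, Polynomial.map_mul]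
  exact fun u hu => (hf.map _).mul_right_eq_zero_iff.1 hu

theorem isSMulRegular_quotient_map_C {a : A} (ha : IsSMulRegular (A ⧸ I) a) :
    IsSMulRegular (A[X] ⧸ I.map C) (C a) := by
  rw [isSMulRegular_quotient_iff_mul_mem] at ha ⊢
  simp only [Ideal.mem_map_C_iff, coeff_C_mul]
  exact fun u hu n => ha _ (hu n)

theorem isSMulRegular_quotient_span_monic {b : A} (hb : IsSMulRegular A b) {f : A[X]}
    (hf : f.Monic) : IsSMulRegular (A[X] ⧸ Ideal.span {f}) (C b) := by
  cases subsingleton_or_nontrivial A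
  · exact Function.injective_of_subsingleton _
  rw [isSMulRegular_quotient_iff_mul_mem]
  intro u hu
  rw [Ideal.mem_span_singleton] at hu ⊢
  have hdvd : f ∣ C b * (u %ₘ f) := by
    rw [modByMonic_eq_sub_mul_div, mul_sub, mul_left_comm]
    exact dvd_sub hu (dvd_mul_right _ _)
  have hzero : C b * (u %ₘ f) = 0 := by
    by_contra hne
    refine hf.not_dvd_of_degree_lt hne ?_ hdvd
    rw [← smul_eq_C_mul]
    exact (degree_smul_le _ _).trans_lt (degree_modByMonic_lt u hf)
  have hmod : u %ₘ f = 0 := by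
    ext n
    simpa using hb.right_eq_zero_of_smul (by simpa using congrArg (coeff · n) hzero)
  exact (modByMonic_eq_zero_iff_dvd hf).1 hmod

theorem isSMulRegular_quotient_map_C_sup_span_monic {a : A} (ha : IsSMulRegular (A ⧸ I) a)
    {f : A[X]} (hf : f.Monic) : IsSMulRegular (A[X] ⧸ (I.map C ⊔ Ideal.span {f})) (C a) := by
  set π := Ideal.Quotient.mk I
  have hπa : IsSMulRegular (A ⧸ I) (π a) :=
    (isSMulRegular_map π fun m => (algebraMap_smul (A ⧸ I) a m)).2 ha
  rw [isSMulRegular_quotient_iff_mul_mem]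
  intro u hu
  obtain ⟨y, hy, z, hz, hyz⟩ := Submodule.mem_sup.1 hu
  obtain ⟨w, rfl⟩ := Ideal.mem_span_singleton'.1 hz
  have hmod : C (π a) * u.map π ∈ Ideal.span {f.map π} := by
    rw [Ideal.mem_span_singleton']
    refine ⟨w.map π, ?_⟩
    rw [← Polynomial.map_C, ← Polynomial.map_mul, ← Polynomial.map_mul, ← hyz,
      Polynomial.map_add, mem_map_C_iff_map_mk_eq_zero.1 hy, zero_add]
  have hreg := isSMulRegular_quotient_span_monic hπa (hf.map π)
  rw [isSMulRegular_quotient_iff_mul_mem] at hreg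
  obtain ⟨t', ht'⟩ := Ideal.mem_span_singleton'.1 (hreg _ hmod)
  obtain ⟨t, rfl⟩ := map_surjective π Ideal.Quotient.mk_surjective t'
  have hker : u - t * f ∈ I.map C := by
    rw [mem_map_C_iff_map_mk_eq_zero, Polynomial.map_sub, Polynomial.map_mul, ht', sub_self]
  rw [← sub_add_cancel u (t * f)]
  exact Submodule.add_mem_sup hker (Ideal.mul_mem_left _ _ (Ideal.mem_span_singleton_self f))

theorem isSMulRegular_X_quotient_map_C_sup_span {c : A} (hc : IsSMulRegular (A ⧸ I) c) {d : ℕ}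
    (hd : d ≠ 0) : IsSMulRegular (A[X] ⧸ (I.map C ⊔ Ideal.span {X ^ d - C c})) (X : A[X]) := by
  rw [← IsSMulRegular.pow_iff (Nat.pos_of_ne_zero hd),
    isSMulRegular_quotient_iff_of_sub_mem
      (Submodule.mem_sup_right (Ideal.mem_span_singleton_self _))]
  exact isSMulRegular_quotient_map_C_sup_span_monic hc (monic_X_pow_sub_C c hd)

end Polynomial

theorem MvPolynomial.finSuccEquiv_rename_succ {R : Type*} [CommRing R] {n : ℕ}
    (p : MvPolynomial (Fin n) R) :
    finSuccEquiv R n (rename Fin.succ p) = Polynomial.C p := by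
  induction p using MvPolynomial.induction_on with
  | C a => simp [finSuccEquiv_apply]
  | add p q hp hq => simp [hp, hq]
  | mul_X p i hp => simp [hp, finSuccEquiv_X_succ]

theorem MvPolynomial.map_finSuccEquiv_map_rename_succ {R : Type*} [CommRing R] {n : ℕ}
    (I : Ideal (MvPolynomial (Fin n) R)) :
    (I.map (rename Fin.succ)).map (finSuccEquiv R n) = I.map Polynomial.C := by
  rw [← Ideal.span_eq I, Ideal.map_span, Ideal.map_span, Ideal.map_span, Set.image_image]
  simp only [finSuccEquiv_rename_succ]

section DiffSq

variable (R : Type*) [CommRing R]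

def diffSq (n : ℕ) (i : Fin n) : MvPolynomial (Fin (n + 1)) R :=
  X i.castSucc ^ 2 - X (Fin.last n) ^ 2

variable {R}

theorem finSuccEquiv_diffSq_zero (n : ℕ) :
    finSuccEquiv R (n + 1) (diffSq R (n + 1) 0) =
      Polynomial.X ^ 2 - Polynomial.C (X (Fin.last n) ^ 2) := by
  simp [diffSq, ← Fin.succ_last, finSuccEquiv_X_zero, finSuccEquiv_X_succ]

theorem rename_succ_diffSq (n : ℕ) (i : Fin n) :
    rename Fin.succ (diffSq R n i) = diffSq R (n + 1) i.succ := by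
  simp [diffSq, ← Fin.succ_last]

theorem span_range_diffSq_succ (n : ℕ) :
    Ideal.span (Set.range (diffSq R (n + 1))) =
      (Ideal.span (Set.range (diffSq R n))).map (rename Fin.succ) ⊔
        Ideal.span {diffSq R (n + 1) 0} := by
  rw [Fin.range_fin_succ, Ideal.span_insert, sup_comm, Ideal.map_span, ← Set.range_comp]
  congr
  funext i
  exact (rename_succ_diffSq n i).symm

theorem isSMulRegular_diffSq_zero {n : ℕ} (I : Ideal (MvPolynomial (Fin (n + 1)) R)) :
    IsSMulRegular (MvPolynomial (Fin (n + 2)) R ⧸ I.map (rename Fin.succ))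
      (diffSq R (n + 1) 0) := by
  rw [← isSMulRegular_quotient_map_iff (finSuccEquiv R (n + 1)),
    map_finSuccEquiv_map_rename_succ, finSuccEquiv_diffSq_zero]
  exact (Polynomial.monic_X_pow_sub_C _ two_ne_zero).isSMulRegular_quotient_map_C

theorem IsSMulRegular.diffSq_succ {n : ℕ} {I : Ideal (MvPolynomial (Fin (n + 1)) R)} {i : Fin n}
    (h : IsSMulRegular (MvPolynomial (Fin (n + 1)) R ⧸ I) (diffSq R n i)) :
    IsSMulRegular (MvPolynomial (Fin (n + 2)) R ⧸ I.map (rename Fin.succ))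
      (diffSq R (n + 1) i.succ) := by
  rw [← rename_succ_diffSq, ← isSMulRegular_quotient_map_iff (finSuccEquiv R (n + 1)),
    map_finSuccEquiv_map_rename_succ, finSuccEquiv_rename_succ]
  exact Polynomial.isSMulRegular_quotient_map_C h

theorem map_finSuccEquiv_span_range_diffSq (n : ℕ) :
    (Ideal.span (Set.range (diffSq R (n + 1)))).map (finSuccEquiv R (n + 1)) =
      (Ideal.span (Set.range (diffSq R n))).map Polynomial.C ⊔
        Ideal.span {Polynomial.X ^ 2 - Polynomial.C (X (Fin.last n) ^ 2)} := by
  rw [span_range_diffSq_succ, Ideal.map_sup, map_finSuccEquiv_map_rename_succ,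
    Ideal.map_span (finSuccEquiv R (n + 1)), Set.image_singleton, finSuccEquiv_diffSq_zero]

theorem isSMulRegular_X_last (n : ℕ) :
    IsSMulRegular (MvPolynomial (Fin (n + 1)) R ⧸ Ideal.span (Set.range (diffSq R n)))
      (X (Fin.last n) : MvPolynomial (Fin (n + 1)) R) := by
  induction n with
  | zero =>
    rw [Set.range_eq_empty, Ideal.span_empty, isSMulRegular_quotient_iff_mul_mem]
    simp only [Submodule.mem_bot]
    exact fun x hx => (isRegular_X (R := R) (n := Fin.last 0)).left (hx.trans (mul_zero _).symm)
  | succ n ih =>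
    rw [← isSMulRegular_quotient_map_iff (finSuccEquiv R (n + 1)),
      map_finSuccEquiv_span_range_diffSq, ← Fin.succ_last, finSuccEquiv_X_succ]
    exact Polynomial.isSMulRegular_quotient_map_C_sup_span_monic ih
      (Polynomial.monic_X_pow_sub_C _ two_ne_zero)

theorem isSMulRegular_X_zero (n : ℕ) :
    IsSMulRegular (MvPolynomial (Fin (n + 2)) R ⧸ Ideal.span (Set.range (diffSq R (n + 1))))
      (X 0 : MvPolynomial (Fin (n + 2)) R) := by
  rw [← isSMulRegular_quotient_map_iff (finSuccEquiv R (n + 1)),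
    map_finSuccEquiv_span_range_diffSq, finSuccEquiv_X_zero]
  exact Polynomial.isSMulRegular_X_quotient_map_C_sup_span ((isSMulRegular_X_last n).pow 2)
    two_ne_zero

theorem range_diffSq_three :
    Set.range (diffSq R 3) = {diffSq R 3 0, diffSq R 3 1, diffSq R 3 2} := by
  ext; simp [Fin.exists_fin_succ, eq_comm]

end DiffSq

theorem stable_span_of_swap_castSucc_succ {k : Type*} [Field k] {n : ℕ}
    {s : Set (MvPolynomial (Fin (n + 1)) k)}
    (h : ∀ i : Fin n, ∀ p ∈ s, rename (Equiv.swap i.castSucc i.succ) p ∈ Submodule.span k s) :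
    Stable (Submodule.span k s) := by
  intro σ
  have hσ : σ ∈ Submonoid.closure (Set.range fun i : Fin n => Equiv.swap i.castSucc i.succ) := by
    rw [Equiv.Perm.mclosure_swap_castSucc_succ]; trivial
  induction hσ using Submonoid.closure_induction with
  | mem τ hτ =>
    obtain ⟨i, rfl⟩ := hτ
    exact Submodule.span_le (p := (Submodule.span k s).comap (rename _).toLinearMap) |>.2 (h i)
  | one => simp
  | mul σ τ _ _ hσ hτ =>
    intro p hp
    rw [Equiv.Perm.coe_mul, ← rename_rename]
    exact hσ _ (hτ p hp)

theorem Submodule.span_pair_le_of_det_ne_zero {K V : Type*} [Field K] [AddCommGroup V]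
    [Module K V] {U : Submodule K V} {x y : V} {a b c d : K} (h₁ : a • x + b • y ∈ U)
    (h₂ : c • x + d • y ∈ U) (hdet : a * d - b * c ≠ 0) : span K {x, y} ≤ U := by
  rw [span_le, Set.insert_subset_iff, Set.singleton_subset_iff, SetLike.mem_coe, SetLike.mem_coe,
    ← smul_mem_iff U hdet, ← smul_mem_iff U hdet (x := y)]
  constructor
  · convert sub_mem (smul_mem U d h₁) (smul_mem U b h₂) using 1; module
  · convert sub_mem (smul_mem U a h₂) (smul_mem U c h₁) using 1; module

theorem MvPolynomial.isUnit_ofNat {σ K : Type*} [Field K] [CharZero K] (n : ℕ) [n.AtLeastTwo] :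
    IsUnit (OfNat.ofNat n : MvPolynomial σ K) := by
  rw [← map_ofNat C n]
  exact (isUnit_iff_ne_zero.2 (OfNat.ofNat_ne_zero n)).map C

section

variable {k : Type*} [Field k]

theorem esymm_fin_four_two : esymm (Fin 4) k 2 =
    X 0 * X 1 + X 0 * X 2 + X 0 * X 3 + X 1 * X 2 + X 1 * X 3 + X 2 * X 3 := by
  simp [esymm_eq_multiset_esymm, Multiset.esymm, Fin.univ_val_map, Multiset.powersetCard_coe,
    List.sublistsLen, List.sublistsLenAux]
  ring

theorem esymm_fin_four_one : esymm (Fin 4) k 1 = X 0 + X 1 + X 2 + X 3 := by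
  simp [esymm_one, Fin.sum_univ_four]

end

section Hadamard

variable (k : Type*) [Field k]

def g₁ : MvPolynomial (Fin 4) k := (X 0 - X 1) * (X 2 - X 3)

def g₂ : MvPolynomial (Fin 4) k := (X 0 - X 2) * (X 1 - X 3)

def hadamardForms : Fin 4 → MvPolynomial (Fin 4) k :=
  ![X 0 + X 1 + X 2 + X 3, X 0 + X 1 - X 2 - X 3, X 0 - X 1 + X 2 - X 3, X 0 - X 1 - X 2 + X 3]

variable [CharZero k]

def hadamard : MvPolynomial (Fin 4) k ≃ₐ[k] MvPolynomial (Fin 4) k :=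
  AlgEquiv.ofAlgHom (aeval (hadamardForms k)) (aeval ((4⁻¹ : k) • hadamardForms k))
    (algHom_ext fun i => by fin_cases i <;> simp [hadamardForms] <;> module)
    (algHom_ext fun i => by fin_cases i <;> simp [hadamardForms] <;> module)

variable {k}

theorem hadamard_apply (p : MvPolynomial (Fin 4) k) :
    hadamard k p = aeval (hadamardForms k) p := rfl

theorem hadamard_g₁ : hadamard k (g₁ k) = 4 * diffSq k 3 2 := by
  simp [hadamard_apply, hadamardForms, g₁, diffSq]; ring

theorem hadamard_g₂ : hadamard k (g₂ k) = 4 * diffSq k 3 1 := by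
  simp [hadamard_apply, hadamardForms, g₂, diffSq]; ring

theorem hadamard_esymm_two :
    hadamard k (esymm (Fin 4) k 2) = 2 * (3 * diffSq k 3 0 - diffSq k 3 1 - diffSq k 3 2) := by
  rw [esymm_fin_four_two]
  simp [hadamard_apply, hadamardForms, diffSq]; ring

theorem hadamard_esymm_one : hadamard k (esymm (Fin 4) k 1) = 4 * X 0 := by
  rw [esymm_fin_four_one]
  simp [hadamard_apply, hadamardForms]; ring

end Hadamard

section Representation

variable {k : Type*} [Field k]

theorem rename_swap_zero_one_g₁ : rename (Equiv.swap 0 1) (g₁ k) = -g₁ k := by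
  simp [g₁, Equiv.swap_apply_of_ne_of_ne]; ring

theorem rename_swap_zero_one_g₂ : rename (Equiv.swap 0 1) (g₂ k) = g₂ k - g₁ k := by
  simp [g₁, g₂, Equiv.swap_apply_of_ne_of_ne]; ring

theorem rename_swap_one_two_g₁ : rename (Equiv.swap 1 2) (g₁ k) = g₂ k := by
  simp [g₁, g₂, Equiv.swap_apply_of_ne_of_ne]

theorem rename_swap_one_two_g₂ : rename (Equiv.swap 1 2) (g₂ k) = g₁ k := by
  simp [g₁, g₂, Equiv.swap_apply_of_ne_of_ne]

theorem rename_swap_two_three_g₁ : rename (Equiv.swap 2 3) (g₁ k) = -g₁ k := by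
  simp [g₁, Equiv.swap_apply_of_ne_of_ne]; ring

theorem rename_swap_two_three_g₂ : rename (Equiv.swap 2 3) (g₂ k) = g₂ k - g₁ k := by
  simp [g₁, g₂, Equiv.swap_apply_of_ne_of_ne]; ring

theorem stable_span_g₁_g₂ : Stable (Submodule.span k {g₁ k, g₂ k}) := by
  have h₁ : g₁ k ∈ Submodule.span k {g₁ k, g₂ k} := Submodule.subset_span (by simp)
  have h₂ : g₂ k ∈ Submodule.span k {g₁ k, g₂ k} := Submodule.subset_span (by simp)
  refine stable_span_of_swap_castSucc_succ fun i p hp => ?_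
  rcases hp with rfl | rfl <;> fin_cases i
  · exact (rename_swap_zero_one_g₁ (k := k)).symm ▸ neg_mem h₁
  · exact (rename_swap_one_two_g₁ (k := k)).symm ▸ h₂
  · exact (rename_swap_two_three_g₁ (k := k)).symm ▸ neg_mem h₁
  · exact (rename_swap_zero_one_g₂ (k := k)).symm ▸ sub_mem h₂ h₁
  · exact (rename_swap_one_two_g₂ (k := k)).symm ▸ h₁
  · exact (rename_swap_two_three_g₂ (k := k)).symm ▸ sub_mem h₂ h₁

theorem linearIndependent_g₁_g₂ : LinearIndependent k ![g₁ k, g₂ k] := by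
  rw [LinearIndependent.pair_iff]
  intro s t hst
  have h₁ := congrArg (eval ![1, 0, 1, 0]) hst
  have h₂ := congrArg (eval ![0, 0, 1, -1]) hst
  simp [g₁, g₂, smul_eq_C_mul] at h₁ h₂
  exact ⟨h₁, h₂⟩

theorem finrank_span_g₁_g₂ : Module.finrank k (Submodule.span k {g₁ k, g₂ k}) = 2 := by
  rw [← Matrix.range_cons_cons_empty, finrank_span_eq_card linearIndependent_g₁_g₂,
    Fintype.card_fin]

theorem eq_bot_or_eq_span_g₁_g₂_of_stable (h3 : (3 : k) ≠ 0)
    {U : Submodule k (MvPolynomial (Fin 4) k)} (hU : U ≤ Submodule.span k {g₁ k, g₂ k})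
    (hstable : Stable U) : U = ⊥ ∨ U = Submodule.span k {g₁ k, g₂ k} := by
  refine or_iff_not_imp_left.2 fun hbot => le_antisymm hU ?_
  obtain ⟨p, hpU, hp0⟩ := (Submodule.ne_bot_iff U).1 hbot
  obtain ⟨a, b, rfl⟩ := Submodule.mem_span_pair.1 (hU hpU)
  have h₁₂ : b • g₁ k + a • g₂ k ∈ U := by
    have := hstable (Equiv.swap 1 2) _ hpU
    rwa [map_add, map_smul, map_smul, rename_swap_one_two_g₁, rename_swap_one_two_g₂,
      add_comm] at this
  have h₀₁ : (-(a + b)) • g₁ k + b • g₂ k ∈ U := by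
    convert hstable (Equiv.swap 0 1) _ hpU using 1
    rw [map_add, map_smul, map_smul, rename_swap_zero_one_g₁, rename_swap_zero_one_g₂]
    module
  by_cases hdet : a * a - b * b = 0
  · refine Submodule.span_pair_le_of_det_ne_zero hpU h₀₁ fun hdet' => hp0 ?_
    have hb : b * (2 * a + b) = 0 := by linear_combination hdet'
    obtain ⟨rfl, rfl⟩ : a = 0 ∧ b = 0 := by
      rcases mul_eq_zero.1 hb with rfl | hb
      · simpa using hdet
      · have ha : 3 * (a * a) = 0 := by linear_combination -hdet - (b - 2 * a) * hb
        have ha : a = 0 := by simpa [h3] using ha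
        exact ⟨ha, by linear_combination hb - 2 * ha⟩
    simp
  · exact Submodule.span_pair_le_of_det_ne_zero hpU h₁₂ hdet

end Representation

section RegularSequence

variable {k : Type*} [Field k] [CharZero k]

theorem isSMulRegular_g₂ : IsSMulRegular (MvPolynomial (Fin 4) k ⧸ Ideal.span {g₁ k}) (g₂ k) := by
  rw [← isSMulRegular_quotient_map_iff (hadamard k), Ideal.map_span, Set.image_singleton,
    hadamard_g₁, hadamard_g₂, Ideal.span_singleton_mul_left_unit (isUnit_ofNat 4),
    isSMulRegular_quotient_unit_mul_iff (isUnit_ofNat 4)]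
  have h : IsSMulRegular (MvPolynomial (Fin 3) k ⧸ Ideal.span {diffSq k 2 1}) (diffSq k 2 0) := by
    have := isSMulRegular_diffSq_zero (Ideal.span {diffSq k 1 0})
    rwa [Ideal.map_span, Set.image_singleton, rename_succ_diffSq] at this
  have := h.diffSq_succ
  rwa [Ideal.map_span, Set.image_singleton, rename_succ_diffSq] at this

theorem hadamard_esymm_two_sub_mem :
    hadamard k (esymm (Fin 4) k 2) - 6 * diffSq k 3 0 ∈ Ideal.span {diffSq k 3 2, diffSq k 3 1} :=
  Ideal.mem_span_pair.2 ⟨-2, -2, by rw [hadamard_esymm_two]; ring⟩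

theorem map_hadamard_span_g₁_g₂ :
    (Ideal.span {g₁ k, g₂ k}).map (hadamard k) = Ideal.span {diffSq k 3 2, diffSq k 3 1} := by
  rw [Ideal.map_span, Set.image_pair, hadamard_g₁, hadamard_g₂, Ideal.span_insert,
    Ideal.span_insert, Ideal.span_singleton_mul_left_unit (isUnit_ofNat 4),
    Ideal.span_singleton_mul_left_unit (isUnit_ofNat 4)]

theorem isSMulRegular_esymm_two :
    IsSMulRegular (MvPolynomial (Fin 4) k ⧸ Ideal.span {g₁ k, g₂ k}) (esymm (Fin 4) k 2) := by
  rw [← isSMulRegular_quotient_map_iff (hadamard k), map_hadamard_span_g₁_g₂,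
    isSMulRegular_quotient_iff_of_sub_mem hadamard_esymm_two_sub_mem,
    isSMulRegular_quotient_unit_mul_iff (isUnit_ofNat 6)]
  have h := isSMulRegular_diffSq_zero (Ideal.span {diffSq k 2 1, diffSq k 2 0})
  rwa [Ideal.map_span, Set.image_pair, rename_succ_diffSq, rename_succ_diffSq] at h

theorem isSMulRegular_esymm_one_pow_three :
    IsSMulRegular (MvPolynomial (Fin 4) k ⧸ Ideal.span {g₁ k, g₂ k, esymm (Fin 4) k 2})
      (esymm (Fin 4) k 1 ^ 3) := by
  have hJ : (Ideal.span {g₁ k, g₂ k, esymm (Fin 4) k 2}).map (hadamard k) =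
      Ideal.span (Set.range (diffSq k 3)) := by
    rw [Ideal.span_insert, Ideal.span_insert, ← sup_assoc, ← Ideal.span_insert, Ideal.map_sup,
      map_hadamard_span_g₁_g₂, Ideal.map_span, Set.image_singleton,
      Ideal.sup_span_singleton_eq_of_sub_mem (isUnit_ofNat 6) hadamard_esymm_two_sub_mem,
      sup_comm, ← Ideal.span_insert, range_diffSq_three, Set.pair_comm]
  rw [← isSMulRegular_quotient_map_iff (hadamard k), hJ, map_pow, hadamard_esymm_one, mul_pow,
    isSMulRegular_quotient_unit_mul_iff ((isUnit_ofNat 4).pow 3), IsSMulRegular.pow_iff three_pos]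
  exact isSMulRegular_X_zero 2

theorem isRegular_g₁_g₂_esymm_two_esymm_one_pow_three :
    RingTheory.Sequence.IsRegular (MvPolynomial (Fin 4) k)
      [g₁ k, g₂ k, esymm (Fin 4) k 2, esymm (Fin 4) k 1 ^ 3] := by
  refine ⟨?_, top_ne_ofList_smul_top ?_⟩
  · change RingTheory.Sequence.IsWeaklyRegular _
      ([g₁ k] ++ [g₂ k] ++ [esymm (Fin 4) k 2] ++ [esymm (Fin 4) k 1 ^ 3])
    simp only [RingTheory.Sequence.isWeaklyRegular_append_singleton_iff,
      RingTheory.Sequence.isWeaklyRegular_singleton_iff]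
    refine ⟨⟨⟨?_, ?_⟩, ?_⟩, ?_⟩
    · exact (IsRegular.of_ne_zero ((linearIndependent_g₁_g₂ (k := k)).ne_zero 0)).left.isSMulRegular
    · rw [Ideal.ofList_singleton]; exact isSMulRegular_g₂
    · rw [show Ideal.ofList ([g₁ k] ++ [g₂ k]) = Ideal.span {g₁ k, g₂ k} by
        simp [Ideal.span_insert]]
      exact isSMulRegular_esymm_two
    · rw [show Ideal.ofList ([g₁ k] ++ [g₂ k] ++ [esymm (Fin 4) k 2]) =
          Ideal.span {g₁ k, g₂ k, esymm (Fin 4) k 2} by simp [Ideal.span_insert]]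
      exact isSMulRegular_esymm_one_pow_three
  · simp [g₁, g₂, esymm_fin_four_two]

end RegularSequence

/-- In `R = k[x_1,…,x_4]` over a field `k` of
characteristic zero, setting `g₁ = (x_1-x_2)(x_3-x_4)` and
`g₂ = (x_1-x_3)(x_2-x_4)`, the sequence `g₁, g₂, e_2, e_1^3` is a regular
sequence, and the `k`-span of `{g₁, g₂}` is an `S_4`-stable subspace of `R`
isomorphic to the irreducible representation `S^{(2,2)}` (the unique
2-dimensional irreducible representation of `S_4`, so this is expressed by:
stable, 2-dimensional and irreducible). -/
theorem stmt16 {k : Type*} [Field k] [CharZero k]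
    (g₁ g₂ : MvPolynomial (Fin 4) k)
    (hg₁ : g₁ = (X 0 - X 1) * (X 2 - X 3))
    (hg₂ : g₂ = (X 0 - X 2) * (X 1 - X 3)) :
    RingTheory.Sequence.IsRegular (MvPolynomial (Fin 4) k)
        [g₁, g₂, esymm (Fin 4) k 2, (esymm (Fin 4) k 1) ^ 3] ∧
      Stable (Submodule.span k {g₁, g₂}) ∧
      Module.finrank k (Submodule.span k {g₁, g₂}) = 2 ∧
      (∀ U ≤ Submodule.span k {g₁, g₂}, Stable U →
        U = ⊥ ∨ U = Submodule.span k {g₁, g₂}) := by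
  subst hg₁ hg₂
  exact ⟨isRegular_g₁_g₂_esymm_two_esymm_one_pow_three, stable_span_g₁_g₂, finrank_span_g₁_g₂,
    fun U hU => eq_bot_or_eq_span_g₁_g₂_of_stable three_ne_zero hU⟩

end
end
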